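/- arXiv:2512.19462 — 2 statements merged into one kernel-verified Lean document; each statement's English description precedes it below -/
import Mathlib

section
/- Let π be a 213-avoiding permutation of length n whose maximal initial increasing run has length r. For 0 ≤ i ≤ n let τ_i be the output of the 213-insertion step at position i applied to π. Then the map i ↦ (|τ_i|, run(τ_i)), where run(σ) is the length of the maximal initial increasing run of σ, is a bijection from {0,…,n} onto the set {(n+1, s) : 1 ≤ s ≤ r+1} ∪ {(m, r) : r+1 ≤ m ≤ n}. -/
open List

attribute [local instance] Classical.propDecidable

/-- `l` is a permutation of length `n`, i.e. a list containing each of `1,…,n` exactly once. -/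
def IsPermList (n : ℕ) (l : List ℕ) : Prop :=
  l.Perm (List.range' 1 n)

/-- Two sequences (with distinct entries) are order-isomorphic: same length and the same
pairwise order relations. -/
def OrderIsoList (a b : List ℕ) : Prop :=
  a.length = b.length ∧
    ∀ i j, i < j → j < a.length →
      (a.getD i 0 < a.getD j 0 ↔ b.getD i 0 < b.getD j 0)

/-- `l` contains the pattern `p`: some subsequence of `l` is order-isomorphic to `p`. -/
def ContainsPat (l p : List ℕ) : Prop :=
  ∃ s, s.Sublist l ∧ OrderIsoList s p

/-- `l` avoids the pattern `p`. -/
def AvoidsPat (l p : List ℕ) : Prop := ¬ ContainsPat l p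

/-- Relabel the entries of a list of distinct naturals order-isomorphically with `1,…,m`. -/
def standardize (l : List ℕ) : List ℕ :=
  l.map fun x => (l.filter fun y => y ≤ x).length

/-- Insert the new maximum value `l.length + 1` immediately after the first `i` entries. -/
def insertMax (l : List ℕ) (i : ℕ) : List ℕ :=
  l.take i ++ (l.length + 1) :: l.drop i

/-- The insertion step at position `i` for the pattern `p`: insert a new maximum after the
first `i` entries, keep the longest prefix avoiding `p` (i.e. remove the minimal suffix so
that the result avoids `p`), then standardize. -/
noncomputable def insStep (p l : List ℕ) (i : ℕ) : List ℕ :=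
  standardize ((insertMax l i).take
    (Nat.findGreatest (fun k => AvoidsPat ((insertMax l i).take k) p)
      (insertMax l i).length))

/-- The length of the maximal initial increasing run of `l`, i.e. of its longest
increasing prefix. -/
noncomputable def runLen (l : List ℕ) : ℕ :=
  Nat.findGreatest (fun k => (l.take k).Pairwise (· < ·)) l.length

/-! Write `M = n + 1` for the inserted value and `r` for the run length of `π`. Since `M` exceeds
every entry, a `213` through `M` uses it as its `3`, with its `21` before it. If `i ≤ r`, the
entries before `M` are increasing, and `π` itself avoids `213`, so nothing is cut: the output has
length `n + 1` and its run is the first `i` entries followed by `M`. If `i > r`, the first `r + 1`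
entries are not increasing, so some pair among them together with `M` forms a `213`: exactly the
first `i` entries survive, and their run is still the run of `π`. Hence `i ↦ (n + 1, i + 1)` for
`i ≤ r` and `i ↦ (i, r)` for `i > r`. -/

lemma AvoidsPat.sublist {s l p : List ℕ} (hs : s.Sublist l) (hl : AvoidsPat l p) :
    AvoidsPat s p := fun ⟨t, ht, hiso⟩ => hl ⟨t, ht.trans hs, hiso⟩

lemma containsPat_213_iff {l : List ℕ} :
    ContainsPat l [2, 1, 3] ↔ ∃ x y z, [x, y, z].Sublist l ∧ y ≤ x ∧ x < z := by
  constructor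
  · rintro ⟨s, hs, hlen, hiso⟩
    obtain ⟨x, y, z, rfl⟩ := List.length_eq_three.mp (by simpa using hlen)
    have h01 := hiso 0 1 (by omega) (by simp)
    have h02 := hiso 0 2 (by omega) (by simp)
    simp only [List.getD_cons_zero, List.getD_cons_succ] at h01 h02
    exact ⟨x, y, z, hs, by omega, by omega⟩
  · rintro ⟨x, y, z, hs, hyx, hxz⟩
    refine ⟨[x, y, z], hs, rfl, fun i j hij hj => ?_⟩
    simp only [List.length] at hj
    interval_cases j <;> interval_cases i <;>
      simp only [List.getD_cons_zero, List.getD_cons_succ] <;> omega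

lemma containsPat_213_append_singleton {s : List ℕ} {M : ℕ} (hs : ¬ s.Pairwise (· < ·))
    (hM : ∀ x ∈ s, x < M) : ContainsPat (s ++ [M]) [2, 1, 3] := by
  obtain ⟨x, y, hxy, hyx⟩ : ∃ x y, [x, y].Sublist s ∧ ¬ x < y := by
    simpa [List.pairwise_iff_forall_sublist] using hs
  exact containsPat_213_iff.mpr
    ⟨x, y, M, hxy.append (List.Sublist.refl _), by omega, hM x (hxy.subset (by simp))⟩

lemma avoidsPat_213_append_cons {s t : List ℕ} {M : ℕ} (hst : AvoidsPat (s ++ t) [2, 1, 3])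
    (hs : s.Pairwise (· < ·)) (hM : ∀ x ∈ s ++ t, x < M) :
    AvoidsPat (s ++ M :: t) [2, 1, 3] := by
  rw [AvoidsPat, containsPat_213_iff]
  rintro ⟨x, y, z, hsub, hyx, hxz⟩
  obtain ⟨s₁, s₂, hsplit, hs₁, hs₂⟩ := List.sublist_append_iff.mp hsub
  rcases List.sublist_cons_iff.mp hs₂ with hs₂ | ⟨t', rfl, ht'⟩
  · exact hst (containsPat_213_iff.mpr ⟨x, y, z, hsplit ▸ hs₁.append hs₂, hyx, hxz⟩)
  · have hMs : ∀ a ∈ s, a < M := fun a ha => hM a (List.mem_append_left t ha)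
    have hMt : ∀ a ∈ t', a < M := fun a ha => hM a (List.mem_append_right s (ht'.subset ha))
    rcases s₁ with _ | ⟨a, _ | ⟨b, _ | ⟨c, s₁⟩⟩⟩ <;>
      simp only [List.cons_append, List.nil_append, List.cons.injEq] at hsplit
    · obtain ⟨rfl, rfl⟩ := hsplit
      have := hMt z (by simp)
      omega
    · obtain ⟨rfl, rfl, -⟩ := hsplit
      have := hMs x (hs₁.subset (by simp))
      omega
    · obtain ⟨rfl, rfl, rfl, -⟩ := hsplit
      have := List.pairwise_pair.mp (hs.sublist hs₁)
      omega
    · simp at hsplit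

lemma length_filter_le_lt_length_filter_le_iff {l : List ℕ} {a b : ℕ} (hb : b ∈ l) :
    (l.filter (· ≤ a)).length < (l.filter (· ≤ b)).length ↔ a < b := by
  constructor
  · intro hlt
    by_contra! hba
    have hsub : (l.filter (· ≤ b)).Sublist (l.filter (· ≤ a)) :=
      List.monotone_filter_right l (by simp only [decide_eq_true_eq]; omega)
    exact absurd hsub.length_le (by omega)
  · intro hab
    have hsub : (l.filter (· ≤ a)).Sublist (l.filter (· ≤ b)) :=
      List.monotone_filter_right l (by simp only [decide_eq_true_eq]; omega)
    refine lt_of_le_of_ne hsub.length_le fun heq => ?_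
    have hbmem : b ∈ l.filter (· ≤ b) := by simpa using hb
    rw [← hsub.eq_of_length heq] at hbmem
    simp only [List.mem_filter, decide_eq_true_eq] at hbmem
    omega

@[simp]
lemma length_standardize (l : List ℕ) : (standardize l).length = l.length := by
  simp [standardize]

lemma pairwise_take_standardize_iff (l : List ℕ) (k : ℕ) :
    ((standardize l).take k).Pairwise (· < ·) ↔ (l.take k).Pairwise (· < ·) := by
  rw [standardize, ← List.map_take, List.pairwise_map]
  exact List.Pairwise.iff_of_mem fun _ hb =>
    length_filter_le_lt_length_filter_le_iff (List.mem_of_mem_take hb)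

lemma runLen_standardize (l : List ℕ) : runLen (standardize l) = runLen l := by
  unfold runLen
  rw [length_standardize]
  congr 1
  funext k
  exact propext (pairwise_take_standardize_iff l k)

lemma runLen_le_length (l : List ℕ) : runLen l ≤ l.length :=
  Nat.findGreatest_le _

lemma pairwise_take_runLen (l : List ℕ) : (l.take (runLen l)).Pairwise (· < ·) :=
  Nat.findGreatest_spec (P := fun k => (l.take k).Pairwise (· < ·)) (Nat.zero_le _) (by simp)

lemma not_pairwise_take_of_runLen_lt {l : List ℕ} {k : ℕ} (hk : runLen l < k)
    (hkl : k ≤ l.length) : ¬ (l.take k).Pairwise (· < ·) :=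
  Nat.findGreatest_is_greatest hk hkl

lemma runLen_eq_of_not_pairwise_take_succ {l : List ℕ} {m : ℕ} (hm : m ≤ l.length)
    (hsorted : (l.take m).Pairwise (· < ·))
    (hnext : m < l.length → ¬ (l.take (m + 1)).Pairwise (· < ·)) : runLen l = m :=
  Nat.findGreatest_eq_iff.mpr ⟨hm, fun _ => hsorted, fun _ hk hkl hsk =>
    hnext (by omega) (hsk.sublist (List.take_sublist_take_left hk))⟩

lemma runLen_take (l : List ℕ) (i : ℕ) : runLen (l.take i) = min (runLen l) i := by
  have hrun := runLen_le_length l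
  apply runLen_eq_of_not_pairwise_take_succ
  · simp only [List.length_take]; omega
  · rw [List.take_take, min_eq_left (min_le_right _ _)]
    exact (pairwise_take_runLen l).sublist (List.take_sublist_take_left (min_le_left _ _))
  · intro hlt
    simp only [List.length_take] at hlt
    rw [List.take_take, min_eq_left (by omega)]
    exact not_pairwise_take_of_runLen_lt (by omega) (by omega)

lemma runLen_append_cons {s t : List ℕ} {x : ℕ} (hs : s.Pairwise (· < ·))
    (hsx : ∀ a ∈ s, a < x) (htx : ∀ b ∈ t, b < x) :
    runLen (s ++ x :: t) = s.length + 1 := by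
  apply runLen_eq_of_not_pairwise_take_succ
  · simp
  · rw [List.take_length_add_append]
    simpa [List.pairwise_append, hs] using hsx
  · intro hlt
    simp only [List.length_append, List.length_cons] at hlt
    obtain ⟨y, t, rfl⟩ := List.exists_cons_of_length_pos (by omega : 0 < t.length)
    rw [add_assoc, List.take_length_add_append]
    have := htx y (by simp)
    simp only [List.take_succ_cons, List.take_zero, List.pairwise_append, List.pairwise_pair,
      not_and]
    exact fun _ hxy => absurd hxy (by omega)

@[simp]
lemma length_insertMax (l : List ℕ) (i : ℕ) : (insertMax l i).length = l.length + 1 := by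
  simp only [insertMax, List.length_append, List.length_take, List.length_cons,
    List.length_drop]
  omega

lemma take_insertMax {l : List ℕ} {i : ℕ} (hi : i ≤ l.length) :
    (insertMax l i).take i = l.take i :=
  List.take_left' (by simpa using hi)

lemma take_succ_insertMax {l : List ℕ} {i : ℕ} (hi : i ≤ l.length) :
    (insertMax l i).take (i + 1) = l.take i ++ [l.length + 1] := by
  have := List.take_length_add_append (l₁ := l.take i) (l₂ := (l.length + 1) :: l.drop i) 1
  rwa [List.length_take_of_le hi] at this

lemma insStep_eq_of_avoidsPat {p l : List ℕ} {i : ℕ} (h : AvoidsPat (insertMax l i) p) :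
    insStep p l i = standardize (insertMax l i) := by
  rw [insStep, Nat.findGreatest_eq (by rwa [List.take_length]), List.take_length]

lemma insStep_eq_of_containsPat_take_succ {p l : List ℕ} {i k : ℕ}
    (hk : k < (insertMax l i).length) (hav : AvoidsPat ((insertMax l i).take k) p)
    (hc : ContainsPat ((insertMax l i).take (k + 1)) p) :
    insStep p l i = standardize ((insertMax l i).take k) := by
  rw [insStep, Nat.findGreatest_eq_iff.mpr ⟨hk.le, fun _ => hav, fun _ hj _ hav' =>
    hav'.sublist (List.take_sublist_take_left hj) hc⟩]

section Pattern213

variable {l : List ℕ} {i : ℕ}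

lemma insStep_213_of_le_runLen (ha : AvoidsPat l [2, 1, 3])
    (hbound : ∀ x ∈ l, x ≤ l.length) (hi : i ≤ runLen l) :
    insStep [2, 1, 3] l i = standardize (insertMax l i) := by
  refine insStep_eq_of_avoidsPat (avoidsPat_213_append_cons ?_ ?_ fun x hx => ?_)
  · rwa [List.take_append_drop]
  · exact (pairwise_take_runLen l).sublist (List.take_sublist_take_left hi)
  · rw [List.take_append_drop] at hx
    have := hbound x hx
    omega

lemma runLen_insertMax (hbound : ∀ x ∈ l, x ≤ l.length) (hi : i ≤ runLen l) :
    runLen (insertMax l i) = i + 1 := by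
  have hil := hi.trans (runLen_le_length l)
  rw [insertMax, runLen_append_cons, List.length_take_of_le hil]
  · exact (pairwise_take_runLen l).sublist (List.take_sublist_take_left hi)
  · exact fun x hx => Nat.lt_succ_of_le (hbound x (List.mem_of_mem_take hx))
  · exact fun x hx => Nat.lt_succ_of_le (hbound x (List.mem_of_mem_drop hx))

lemma insStep_213_of_runLen_lt (ha : AvoidsPat l [2, 1, 3])
    (hbound : ∀ x ∈ l, x ≤ l.length) (hi : runLen l < i) (hil : i ≤ l.length) :
    insStep [2, 1, 3] l i = standardize (l.take i) := by
  rw [insStep_eq_of_containsPat_take_succ (k := i), take_insertMax hil]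
  · simp only [length_insertMax]
    omega
  · rw [take_insertMax hil]
    exact ha.sublist (List.take_sublist i l)
  · rw [take_succ_insertMax hil]
    exact containsPat_213_append_singleton (not_pairwise_take_of_runLen_lt hi hil)
      fun x hx => Nat.lt_succ_of_le (hbound x (List.mem_of_mem_take hx))

lemma length_runLen_insStep_213 (ha : AvoidsPat l [2, 1, 3])
    (hbound : ∀ x ∈ l, x ≤ l.length) (hil : i ≤ l.length) :
    ((insStep [2, 1, 3] l i).length, runLen (insStep [2, 1, 3] l i)) =
      if i ≤ runLen l then (l.length + 1, i + 1) else (i, runLen l) := by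
  split_ifs with hir
  · rw [insStep_213_of_le_runLen ha hbound hir, length_standardize, runLen_standardize,
      length_insertMax, runLen_insertMax hbound hir]
  · rw [insStep_213_of_runLen_lt ha hbound (by omega) hil, length_standardize,
      runLen_standardize, runLen_take, List.length_take_of_le hil, min_eq_left (by omega)]

end Pattern213

lemma bijOn_Iic_ite {n r : ℕ} (hrn : r ≤ n) :
    Set.BijOn (fun i => if i ≤ r then (n + 1, i + 1) else (i, r)) (Set.Iic n)
      ({q : ℕ × ℕ | q.1 = n + 1 ∧ 1 ≤ q.2 ∧ q.2 ≤ r + 1} ∪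
        {q : ℕ × ℕ | q.2 = r ∧ r + 1 ≤ q.1 ∧ q.1 ≤ n}) := by
  refine ⟨fun i (hi : i ≤ n) => ?_, fun i (hi : i ≤ n) j (hj : j ≤ n) hij => ?_, ?_⟩
  · dsimp only
    split_ifs
    · exact Or.inl ⟨rfl, by omega, by omega⟩
    · exact Or.inr ⟨rfl, by omega, by omega⟩
  · dsimp only at hij
    split_ifs at hij <;> simp only [Prod.mk.injEq] at hij <;> omega
  · rintro ⟨m, s⟩ (⟨rfl, hs₁, hs₂⟩ | ⟨rfl, hm₁, hm₂⟩)
    · exact ⟨s - 1, show s - 1 ≤ n by omega,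
        by simp only [if_pos (show s - 1 ≤ r by omega), Nat.sub_add_cancel hs₁]⟩
    · exact ⟨m, show m ≤ n from hm₂, by simp only [if_neg (show ¬ m ≤ s by omega)]⟩

/-- For a 213-avoiding permutation `π` of length `n` with initial increasing run of
length `r`, the map sending an insertion position `i ∈ {0,…,n}` to the pair
(length, initial-run length) of the output of the 213-insertion step at position `i`
is a bijection onto `{(n+1, s) : 1 ≤ s ≤ r+1} ∪ {(m, r) : r+1 ≤ m ≤ n}`. -/
theorem bijOn_insStep_run (n r : ℕ) (π : List ℕ)
    (h : IsPermList n π) (ha : AvoidsPat π [2, 1, 3]) (hr : runLen π = r) :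
    Set.BijOn
      (fun i => ((insStep [2, 1, 3] π i).length, runLen (insStep [2, 1, 3] π i)))
      (Set.Iic n)
      ({q : ℕ × ℕ | q.1 = n + 1 ∧ 1 ≤ q.2 ∧ q.2 ≤ r + 1} ∪
        {q : ℕ × ℕ | q.2 = r ∧ r + 1 ≤ q.1 ∧ q.1 ≤ n}) := by
  have hlen : π.length = n := by simpa using h.length_eq
  have hbound : ∀ x ∈ π, x ≤ π.length := fun x hx => by
    have := List.mem_range'_1.mp (h.mem_iff.mp hx)
    omega
  subst hr hlen
  exact (bijOn_Iic_ite (runLen_le_length π)).congr fun i hi =>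
    (length_runLen_insStep_213 ha hbound hi).symm
end

section
/- Let T be a finite binary tree. Then the function g is injective on the leaves of T: if u and v are distinct leaves of T, then g(u) ≠ g(v). -/
/-- The subtree of a binary tree reached by following a path from the root, where `false`
means "step to the left child" and `true` means "step to the right child".  Stepping from
the empty tree yields the empty tree. -/
def subtreeAt : BinaryTree Unit → List Bool → BinaryTree Unit
  | t, [] => t
  | BinaryTree.nil, _ :: _ => BinaryTree.nil
  | BinaryTree.node _ l r, b :: p => subtreeAt (if b then r else l) p

/-- A path `p` identifies a node of the tree `t` if the subtree reached is nonempty. -/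
def IsNodeOf (t : BinaryTree Unit) (p : List Bool) : Prop := subtreeAt t p ≠ BinaryTree.nil

/-- A path `p` identifies a leaf of `t`: a node with no children. -/
def IsLeafOf (t : BinaryTree Unit) (p : List Bool) : Prop :=
  ∃ a, subtreeAt t p = BinaryTree.node a BinaryTree.nil BinaryTree.nil

/-- The value `g(v)` of the node reached by the path `p`: along the path from the root,
each time the path steps from a node `w` to its left child, add `1` plus the number of
nodes in the right subtree of `w`.  (So `g` of the root is `0`.) -/
def g : BinaryTree Unit → List Bool → ℕ
  | _, [] => 0
  | BinaryTree.nil, _ :: _ => 0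
  | BinaryTree.node _ l r, b :: p => if b then g r p else r.numNodes + 1 + g l p

/-!
Every step to a left child adds more than the whole right subtree can ever contribute,
since `g` of a node is smaller than the size of its tree. Hence two leaves whose paths first
diverge at a node `w` are separated there: the one in the left subtree of `w` has the larger
value of `g`. Paths that never diverge are comparable, and a leaf has no proper descendants.
-/

open BinaryTree

theorem IsLeafOf.isNodeOf {t : BinaryTree Unit} {p : List Bool} (h : IsLeafOf t p) :
    IsNodeOf t p := by
  obtain ⟨a, ha⟩ := h
  simp [IsNodeOf, ha]

theorem not_isLeafOf_nil (p : List Bool) : ¬ IsLeafOf nil p := by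
  rintro ⟨a, ha⟩
  cases p <;> cases ha

theorem not_isNodeOf_cons_of_isLeafOf_nil {t : BinaryTree Unit} (b : Bool) (q : List Bool)
    (h : IsLeafOf t []) : ¬ IsNodeOf t (b :: q) := by
  obtain ⟨a, rfl⟩ := h
  cases b <;> cases q <;> simp [IsNodeOf, subtreeAt]

theorem g_lt_numNodes : ∀ {t : BinaryTree Unit} {p : List Bool}, IsNodeOf t p → g t p < t.numNodes
  | nil, [], h | nil, _ :: _, h => absurd rfl h
  | node a l r, [], _ => by simp [g, numNodes]
  | node a l r, true :: p, h => by
    have := g_lt_numNodes (t := r) (p := p) h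
    simp only [g, if_true, numNodes]
    omega
  | node a l r, false :: p, h => by
    have := g_lt_numNodes (t := l) (p := p) h
    simp only [g, Bool.false_eq_true, if_false, numNodes]
    omega

theorem g_node_true_lt_g_node_false (a : Unit) (l : BinaryTree Unit) {r : BinaryTree Unit}
    {q : List Bool} (p : List Bool) (hq : IsNodeOf r q) :
    g (node a l r) (true :: q) < g (node a l r) (false :: p) := by
  have := g_lt_numNodes hq
  simp only [g, if_true, Bool.false_eq_true, if_false]
  omega

/-- The function `g` is injective on the leaves of a finite binary tree. -/
theorem g_injective_on_leaves (t : BinaryTree Unit) (u v : List Bool)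
    (hu : IsLeafOf t u) (hv : IsLeafOf t v) (huv : u ≠ v) :
    g t u ≠ g t v := by
  induction t generalizing u v with
  | nil => exact absurd hu (not_isLeafOf_nil u)
  | node a l r ihl ihr =>
    rcases u with _ | ⟨b, p⟩ <;> rcases v with _ | ⟨c, q⟩
    · exact absurd rfl huv
    · exact absurd hv.isNodeOf (not_isNodeOf_cons_of_isLeafOf_nil c q hu)
    · exact absurd hu.isNodeOf (not_isNodeOf_cons_of_isLeafOf_nil b p hv)
    cases b <;> cases c
    · simpa [g] using ihl p q hu hv (by simpa using huv)
    · exact (g_node_true_lt_g_node_false a l p (IsLeafOf.isNodeOf (t := r) hv)).ne'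
    · exact (g_node_true_lt_g_node_false a l q (IsLeafOf.isNodeOf (t := r) hu)).ne
    · simpa [g] using ihr p q hu hv (by simpa using huv)
end
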